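/- Let n and m be natural numbers. Form the concrete lax sum L of the sequence C^0_m → C^1_m → ... → C^n_m, where C^j_m = (Fin j → Fin (m+1)) with the pointwise order and each map C^j_m → C^{j+1}_m prepends a 0 coordinate: L is the sigma type of pairs (j, x) with j ∈ Fin (n+1) and x : Fin j → Fin (m+1), ordered by (j, x) ≤ (l, y) iff j ≤ l and the tuple obtained from x by prepending l − j zeros is ≤ y pointwise. Then L is order-isomorphic to the subposet of (Fin n → Fin (m+2)) (pointwise order) consisting of those tuples x such that for every index i with i+1 < n, if x(i+1) = 0 then x(i) = 0. -/

import Mathlib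

/-- Prepending `l - j` zeros to a tuple `x : Fin j → Fin (m+1)`, producing a tuple
of length `l` (when `j ≤ l`; positions `< l - j` are `0`). -/
def prependZeros {m j l : ℕ} (x : Fin j → Fin (m + 1)) : Fin l → Fin (m + 1) :=
  fun i => if hi : (i : ℕ) < l - j then 0
    else x ⟨(i : ℕ) - (l - j), by have := i.isLt; omega⟩

/-!
Send `(j, x)` to the tuple of length `n` obtained by raising every value of `x` by one and
prepending `n - j` zeros. The zeros of the image are exactly the prepended ones, so they form an
initial segment whose length recovers `j`, and then the nonzero values recover `x`. Since
prepending zeros is functorial (`F_{l,n} ∘ F_{j,l} = F_{j,n}`) and reflects the pointwise order,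
comparing the images of `(j, x)` and `(l, y)` amounts to comparing `j` with `l` and then
`F_{j,l} x` with `y`.
-/

section prependZeros

variable {m j l : ℕ}

theorem prependZeros_apply_of_lt (x : Fin j → Fin (m + 1)) {i : Fin l} (hi : (i : ℕ) < l - j) :
    prependZeros x i = 0 :=
  dif_pos hi

theorem prependZeros_apply_of_le (x : Fin j → Fin (m + 1)) {i : Fin l} (hi : l - j ≤ (i : ℕ)) :
    prependZeros x i = x ⟨(i : ℕ) - (l - j), by have := i.isLt; omega⟩ :=
  dif_neg (by omega)

theorem prependZeros_apply_add (x : Fin j → Fin (m + 1)) (hjl : j ≤ l) (k : Fin j) :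
    prependZeros (l := l) x ⟨k + (l - j), by omega⟩ = x k := by
  rw [prependZeros_apply_of_le x (by simp)]
  congr 1
  ext
  simp

theorem prependZeros_self (x : Fin j → Fin (m + 1)) : prependZeros (l := j) x = x := by
  funext k
  simpa using prependZeros_apply_add x le_rfl k

theorem prependZeros_prependZeros {n : ℕ} (x : Fin j → Fin (m + 1)) (hjl : j ≤ l) (hln : l ≤ n) :
    prependZeros (l := n) (prependZeros (l := l) x) = prependZeros x := by
  funext i
  simp only [prependZeros]
  split_ifs <;> first | rfl | omega | (congr 1; ext; dsimp only; omega)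

theorem prependZeros_mono : Monotone (prependZeros (m := m) (j := j) (l := l)) := by
  intro x y hxy i
  simp only [prependZeros]
  split_ifs
  · rfl
  · exact hxy _

theorem prependZeros_le_prependZeros_iff {x y : Fin j → Fin (m + 1)} (hjl : j ≤ l) :
    prependZeros (l := l) x ≤ prependZeros y ↔ x ≤ y := by
  refine ⟨fun h k => ?_, fun h => prependZeros_mono h⟩
  simpa only [prependZeros_apply_add _ hjl] using h ⟨k + (l - j), by omega⟩

theorem prependZeros_comp_apply_of_le {m' : ℕ} (f : Fin (m + 1) → Fin (m' + 1))
    (x : Fin j → Fin (m + 1)) {i : Fin l} (hi : l - j ≤ (i : ℕ)) :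
    prependZeros (f ∘ x) i = f (prependZeros x i) := by
  rw [prependZeros_apply_of_le _ hi, prependZeros_apply_of_le _ hi, Function.comp_apply]

theorem prependZeros_comp_le {m' : ℕ} (f : Fin (m + 1) → Fin (m' + 1))
    (x : Fin j → Fin (m + 1)) : prependZeros (l := l) (f ∘ x) ≤ f ∘ prependZeros x := by
  intro i
  by_cases hi : (i : ℕ) < l - j
  · exact (prependZeros_apply_of_lt _ hi).trans_le (Fin.zero_le _)
  · exact (prependZeros_comp_apply_of_le f x (not_lt.mp hi)).le

theorem prependZeros_comp_succ_eq_zero_iff (x : Fin j → Fin (m + 1)) (i : Fin l) :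
    prependZeros (Fin.succ ∘ x) i = 0 ↔ (i : ℕ) < l - j := by
  by_cases hi : (i : ℕ) < l - j
  · simp [prependZeros_apply_of_lt _ hi, hi]
  · simp [prependZeros_apply_of_le _ (not_lt.mp hi), hi, Fin.succ_ne_zero]

end prependZeros

section ZerosAreInitial

variable {α : Type*} [Zero α] {n : ℕ}

def ZerosAreInitial (x : Fin n → α) : Prop :=
  ∀ (i : ℕ) (h : i + 1 < n), x ⟨i + 1, h⟩ = 0 → x ⟨i, Nat.lt_of_succ_lt h⟩ = 0

theorem ZerosAreInitial.eq_zero_of_le {x : Fin n → α} (hx : ZerosAreInitial x) {i i' : Fin n}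
    (hii' : i ≤ i') (hi' : x i' = 0) : x i = 0 := by
  suffices ∀ k, (i : ℕ) ≤ k → ∀ hk : k < n, x ⟨k, hk⟩ = 0 → x i = 0 from
    this i' hii' i'.isLt hi'
  intro k hik
  induction k, hik using Nat.le_induction with
  | base => exact fun _ h => h
  | succ k _ ih => exact fun hk h => ih (by omega) (hx k hk h)

theorem ZerosAreInitial.exists_eq_zero_iff_lt {x : Fin n → α} (hx : ZerosAreInitial x) :
    ∃ k ≤ n, ∀ i : Fin n, x i = 0 ↔ (i : ℕ) < k := by
  classical
  have hex : ∃ k, ∀ i : Fin n, k ≤ (i : ℕ) → x i ≠ 0 := ⟨n, fun i hi => absurd i.isLt (by omega)⟩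
  refine ⟨Nat.find hex, Nat.find_min' hex fun i hi => absurd i.isLt (by omega), fun i => ?_⟩
  refine ⟨fun hi => not_le.mp fun hki => Nat.find_spec hex i hki hi, fun hik => ?_⟩
  obtain ⟨i', hii', hi'⟩ : ∃ i' : Fin n, (i : ℕ) ≤ i' ∧ x i' = 0 := by
    simpa using Nat.find_min hex hik
  exact hx.eq_zero_of_le hii' hi'

end ZerosAreInitial

section LaxSum

variable {n m : ℕ}

def laxSumToTuple (a : Σ j : Fin (n + 1), (Fin (j : ℕ) → Fin (m + 1))) : Fin n → Fin (m + 2) :=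
  prependZeros (Fin.succ ∘ a.2)

theorem laxSumToTuple_eq_zero_iff (a : Σ j : Fin (n + 1), (Fin (j : ℕ) → Fin (m + 1)))
    (i : Fin n) : laxSumToTuple a i = 0 ↔ (i : ℕ) < n - a.1 :=
  prependZeros_comp_succ_eq_zero_iff _ i

theorem zerosAreInitial_laxSumToTuple (a : Σ j : Fin (n + 1), (Fin (j : ℕ) → Fin (m + 1))) :
    ZerosAreInitial (laxSumToTuple a) := by
  intro i h
  simp only [laxSumToTuple_eq_zero_iff]
  omega

theorem le_of_laxSumToTuple_le {a b : Σ j : Fin (n + 1), (Fin (j : ℕ) → Fin (m + 1))}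
    (h : laxSumToTuple a ≤ laxSumToTuple b) : (a.1 : ℕ) ≤ b.1 := by
  by_contra! hlt
  have hb : laxSumToTuple b ⟨n - a.1, by omega⟩ = 0 :=
    (laxSumToTuple_eq_zero_iff b _).mpr (by dsimp only; omega)
  exact lt_irrefl _ ((laxSumToTuple_eq_zero_iff a _).mp (Fin.le_zero_iff.mp (hb ▸ h _)))

theorem laxSumToTuple_le_iff (a b : Σ j : Fin (n + 1), (Fin (j : ℕ) → Fin (m + 1))) :
    ((a.1 : ℕ) ≤ b.1 ∧ prependZeros a.2 ≤ b.2) ↔ laxSumToTuple a ≤ laxSumToTuple b := by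
  obtain ⟨j, x⟩ := a
  obtain ⟨l, y⟩ := b
  refine ⟨fun ⟨hjl, hxy⟩ => ?_, fun h => ?_⟩
  · rw [laxSumToTuple, laxSumToTuple, ← prependZeros_prependZeros _ hjl l.is_le]
    exact prependZeros_mono <|
      (prependZeros_comp_le _ _).trans fun k => Fin.succ_le_succ_iff.mpr (hxy k)
  · have hjl : j ≤ l := le_of_laxSumToTuple_le h
    rw [laxSumToTuple, laxSumToTuple, ← prependZeros_prependZeros _ hjl l.is_le,
      prependZeros_le_prependZeros_iff l.is_le] at h
    refine ⟨hjl, fun k => ?_⟩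
    by_cases hk : (k : ℕ) < l - j
    · exact (prependZeros_apply_of_lt x hk).trans_le (Fin.zero_le _)
    · have := h k
      rwa [prependZeros_comp_apply_of_le _ _ (not_lt.mp hk), Function.comp_apply,
        Fin.succ_le_succ_iff] at this

theorem laxSumToTuple_injective :
    Function.Injective (laxSumToTuple : (Σ j : Fin (n + 1), (Fin (j : ℕ) → Fin (m + 1))) → _) := by
  rintro ⟨j, x⟩ ⟨l, y⟩ h
  obtain ⟨hjl, hxy⟩ := (laxSumToTuple_le_iff _ _).mpr h.le
  obtain ⟨hlj, hyx⟩ := (laxSumToTuple_le_iff _ _).mpr h.ge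
  obtain rfl : j = l := Fin.ext (le_antisymm hjl hlj)
  dsimp only at hxy hyx
  rw [prependZeros_self] at hxy hyx
  rw [le_antisymm hxy hyx]

theorem ZerosAreInitial.exists_laxSumToTuple_eq {x : Fin n → Fin (m + 2)}
    (hx : ZerosAreInitial x) : ∃ a, laxSumToTuple (m := m) a = x := by
  obtain ⟨k, hkn, hzero⟩ := hx.exists_eq_zero_iff_lt
  refine ⟨⟨⟨n - k, by omega⟩, fun (i : Fin (n - k)) => (x ⟨i + k, by omega⟩).pred
    ((hzero _).not.mpr (by simp))⟩, funext fun i => ?_⟩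
  by_cases hi : (i : ℕ) < k
  · rw [(laxSumToTuple_eq_zero_iff _ i).mpr (by dsimp only; omega), (hzero i).mpr hi]
  · rw [laxSumToTuple, prependZeros_apply_of_le _ (by dsimp only; omega), Function.comp_apply,
      Fin.succ_pred]
    congr 1
    ext
    dsimp only
    omega

end LaxSum

/-- The concrete lax sum of `C^0_m → C^1_m → ⋯ → C^n_m` (maps prepending a `0`
coordinate), i.e. the sigma type `Σ j : Fin (n+1), Fin j → Fin (m+1)` ordered by
`(j, x) ≤ (l, y)` iff `j ≤ l` and the tuple obtained from `x` by prepending `l - j`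
zeros is `≤ y` pointwise, is order-isomorphic to the subposet of `Fin n → Fin (m+2)`
(pointwise order) of tuples with `x (i+1) = 0 → x i = 0`. -/
theorem stmt_10 (n m : ℕ) :
    ∃ e : (Σ j : Fin (n + 1), (Fin (j : ℕ) → Fin (m + 1))) ≃
        {x : Fin n → Fin (m + 2) //
          ∀ (i : ℕ) (h : i + 1 < n), x ⟨i + 1, h⟩ = 0 → x ⟨i, Nat.lt_of_succ_lt h⟩ = 0},
      ∀ a b : Σ j : Fin (n + 1), (Fin (j : ℕ) → Fin (m + 1)),
        ((a.1 : ℕ) ≤ (b.1 : ℕ) ∧ prependZeros a.2 ≤ b.2) ↔ e a ≤ e b :=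
  ⟨Equiv.ofBijective (fun a => ⟨laxSumToTuple a, zerosAreInitial_laxSumToTuple a⟩)
      ⟨fun _ _ h => laxSumToTuple_injective (congrArg Subtype.val h),
        fun x => (ZerosAreInitial.exists_laxSumToTuple_eq x.2).imp fun _ h => Subtype.ext h⟩,
    laxSumToTuple_le_iff⟩
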